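/- arXiv:1809.09546 — 2 statements merged into one kernel-verified Lean document; each statement's English description precedes it below -/
import Mathlib

section
/- Let Y = σ(1-|β|)·(N/Z) + σβT + μ, where N, Z are independent standard normal random variables, T is a random variable with characteristic function exp{-|t|[1 + i sgn(t)(2/π) log|t|]} (totally skewed Cauchy, S₁(1,1,1,0)), independent of (N,Z), β ∈ [-1,1], σ > 0, μ ∈ ℝ. Then Y has the S₀(1, β, σ, μ) Cauchy characteristic function exp{-|σt|[1 + iβ sgn(t)(2/π) log|tσ|] + itμ₀} for a suitable location μ₀ determined by μ, β, σ. -/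
open MeasureTheory ProbabilityTheory

open Real Set

lemma phi_image {a : ℝ} (ha : 0 < a) : (fun z : ℝ => z - a/z) '' Ioi 0 = univ := by
  apply eq_univ_of_forall
  intro w
  set s := Real.sqrt (w^2 + 4*a) with hs
  have hs2 : s^2 = w^2 + 4*a := Real.sq_sqrt (by positivity)
  have hslt : |w| < s := by
    rw [hs, ← Real.sqrt_sq_eq_abs]
    exact Real.sqrt_lt_sqrt (by positivity) (by linarith)
  have hz : 0 < (w + s)/2 := by
    have h1 := neg_abs_le w
    linarith
  refine ⟨(w + s)/2, hz, ?_⟩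
  have hws : w + s ≠ 0 := by intro h; rw [h] at hz; simp at hz
  simp only
  field_simp
  nlinarith

lemma phi_injOn {a : ℝ} (ha : 0 < a) : InjOn (fun z : ℝ => z - a/z) (Ioi 0) := by
  apply StrictMonoOn.injOn
  intro x hx y hy hxy
  simp only [mem_Ioi] at hx hy
  have : a / y < a / x := by gcongr
  simp only
  linarith

lemma phi_deriv {a : ℝ} {z : ℝ} (hz : z ∈ Ioi (0:ℝ)) :
    HasDerivWithinAt (fun z : ℝ => z - a/z) (1 + a/z^2) (Ioi 0) z := by
  have hz' : (z:ℝ) ≠ 0 := ne_of_gt hz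
  have h1 : HasDerivAt (fun z : ℝ => a * z⁻¹) (a * (-(z^2)⁻¹)) z :=
    (hasDerivAt_inv hz').const_mul a
  have h2 := (hasDerivAt_id z).sub h1
  have h3 : 1 - a * (-(z^2)⁻¹) = 1 + a/z^2 := by field_simp; ring
  rw [h3] at h2
  have h4 : (fun z : ℝ => z - a/z) = fun z : ℝ => id z - a * z⁻¹ := by
    funext x; simp [div_eq_mul_inv]
  rw [h4]
  exact h2.hasDerivWithinAt

lemma inv_image {a : ℝ} (ha : 0 < a) : (fun z : ℝ => a/z) '' Ioi 0 = Ioi 0 := by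
  ext u
  constructor
  · rintro ⟨z, hz, rfl⟩; exact div_pos ha hz
  · intro hu; exact ⟨a/u, div_pos ha hu, by field_simp⟩

lemma inv_deriv {a : ℝ} {z : ℝ} (hz : z ∈ Ioi (0:ℝ)) :
    HasDerivWithinAt (fun z : ℝ => a/z) (-(a/z^2)) (Ioi 0) z := by
  have hz' : (z:ℝ) ≠ 0 := ne_of_gt hz
  have h1 : HasDerivAt (fun z : ℝ => a * z⁻¹) (a * (-(z^2)⁻¹)) z :=
    (hasDerivAt_inv hz').const_mul a
  have h3 : a * (-(z^2)⁻¹) = -(a/z^2) := by field_simp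
  rw [h3] at h1
  have h4 : (fun z : ℝ => a/z) = fun z : ℝ => a * z⁻¹ := by
    funext x; simp [div_eq_mul_inv]
  rw [h4]
  exact h1.hasDerivWithinAt

lemma gauss_total : ∫ w : ℝ, Real.exp (-w^2/2) = Real.sqrt (2*π) := by
  have h := integral_gaussian (1/2)
  rw [show (π / (1/2)) = 2*π by ring] at h
  rw [← h]
  congr 1
  funext x
  congr 1
  ring

lemma step_B {a : ℝ} (ha : 0 < a) :
    ∫ z in Ioi (0:ℝ), |1 + a/z^2| • Real.exp (-(z - a/z)^2/2) = Real.sqrt (2*π) := by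
  have := integral_image_eq_integral_abs_deriv_smul measurableSet_Ioi
    (fun z hz => phi_deriv hz) (phi_injOn ha) (fun w => Real.exp (-w^2/2))
  rw [phi_image ha] at this
  rw [← this, setIntegral_univ, gauss_total]

lemma step_B_int {a : ℝ} (ha : 0 < a) :
    IntegrableOn (fun z => |1 + a/z^2| • Real.exp (-(z - a/z)^2/2)) (Ioi (0:ℝ)) := by
  rw [← integrableOn_image_iff_integrableOn_abs_deriv_smul measurableSet_Ioi
    (fun z hz => phi_deriv hz) (phi_injOn ha) (fun w => Real.exp (-w^2/2))]
  rw [phi_image ha, integrableOn_univ]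
  have h : Integrable (fun x : ℝ => rexp (-(1/2) * x^2)) := integrable_exp_neg_mul_sq (by norm_num)
  have he : (fun w : ℝ => rexp (-w^2/2)) = fun x : ℝ => rexp (-(1/2) * x^2) := by
    funext x; congr 1; ring
  rw [he]; exact h

lemma step_A {a : ℝ} (ha : 0 < a) :
    ∫ z in Ioi (0:ℝ), Real.exp (-(z - a/z)^2/2)
      = ∫ z in Ioi (0:ℝ), (a/z^2) * Real.exp (-(z - a/z)^2/2) := by
  have := integral_image_eq_integral_abs_deriv_smul measurableSet_Ioi
    (fun z hz => inv_deriv (a := a) hz) (fun x hx y hy h => by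
      have hx' : x ≠ 0 := ne_of_gt (mem_Ioi.mp hx)
      have hy' : y ≠ 0 := ne_of_gt (mem_Ioi.mp hy)
      have h' : a / x = a / y := h
      field_simp at h'
      rcases h' with rfl | h0
      · rfl)
    (fun u => Real.exp (-(u - a/u)^2/2))
  rw [inv_image ha] at this
  rw [this]
  apply setIntegral_congr_fun measurableSet_Ioi
  intro z hz
  have hz' : (z:ℝ) ≠ 0 := ne_of_gt (mem_Ioi.mp hz)
  have h1 : a / (a/z) = z := by field_simp
  show |(-(a/z^2))| • rexp (-(a/z - a/(a/z))^2/2) = a/z^2 * rexp (-(z - a/z)^2/2)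
  rw [abs_neg, abs_of_pos (by positivity : (0:ℝ) < a/z^2), h1, smul_eq_mul]
  congr 2
  ring

lemma meas_g {a : ℝ} : Measurable (fun z : ℝ => Real.exp (-(z - a/z)^2/2)) := by
  apply Measurable.exp
  apply Measurable.div _ measurable_const
  apply Measurable.neg
  exact ((measurable_id.sub (measurable_const.div measurable_id)).pow measurable_const)

lemma int_g {a : ℝ} (ha : 0 < a) :
    IntegrableOn (fun z : ℝ => Real.exp (-(z - a/z)^2/2)) (Ioi (0:ℝ)) := by
  apply Integrable.mono' (step_B_int ha) meas_g.aestronglyMeasurable.restrict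
  rw [ae_restrict_iff' measurableSet_Ioi]
  refine ae_of_all _ (fun z hz => ?_)
  have hz' : (0:ℝ) < z := mem_Ioi.mp hz
  rw [Real.norm_eq_abs, abs_of_pos (Real.exp_pos _), smul_eq_mul]
  have h1 : (1:ℝ) ≤ |1 + a/z^2| := by
    rw [abs_of_pos (by positivity)]
    have : 0 < a/z^2 := by positivity
    linarith
  nlinarith [Real.exp_pos (-(z - a/z)^2/2)]

lemma int_ag {a : ℝ} (ha : 0 < a) :
    IntegrableOn (fun z : ℝ => (a/z^2) * Real.exp (-(z - a/z)^2/2)) (Ioi (0:ℝ)) := by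
  have hm : Measurable (fun z : ℝ => (a/z^2) * Real.exp (-(z - a/z)^2/2)) := by
    exact (measurable_const.div (measurable_id.pow measurable_const)).mul meas_g
  apply Integrable.mono' (step_B_int ha) hm.aestronglyMeasurable.restrict
  rw [ae_restrict_iff' measurableSet_Ioi]
  refine ae_of_all _ (fun z hz => ?_)
  have hz' : (0:ℝ) < z := mem_Ioi.mp hz
  rw [Real.norm_eq_abs, smul_eq_mul, abs_of_nonneg (by positivity)]
  have h1 : a/z^2 ≤ |1 + a/z^2| := by
    rw [abs_of_pos (by positivity)]
    linarith
  nlinarith [Real.exp_pos (-(z - a/z)^2/2)]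

lemma half_line {a : ℝ} (ha : 0 < a) :
    ∫ z in Ioi (0:ℝ), Real.exp (-(z - a/z)^2/2) = Real.sqrt (2*π) / 2 := by
  have hsum : ∫ z in Ioi (0:ℝ), (Real.exp (-(z - a/z)^2/2) + (a/z^2) * Real.exp (-(z - a/z)^2/2))
      = Real.sqrt (2*π) := by
    rw [← step_B ha]
    apply setIntegral_congr_fun measurableSet_Ioi
    intro z hz
    have hz' : (0:ℝ) < z := mem_Ioi.mp hz
    show _ = |1 + a/z^2| • rexp (-(z - a/z)^2/2)
    rw [smul_eq_mul, abs_of_pos (by positivity)]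
    ring
  rw [integral_add (int_g ha) (int_ag ha), ← step_A ha] at hsum
  linarith

lemma glasser {a : ℝ} (ha : 0 ≤ a) :
    ∫ z : ℝ, Real.exp (-(a^2/(2*z^2)) - z^2/2) = Real.sqrt (2*π) * Real.exp (-a) := by
  rcases eq_or_lt_of_le ha with rfl | ha
  · simp only [ne_eq, zero_pow, zero_div, neg_zero, zero_sub, Real.exp_zero, mul_one]
    rw [← gauss_total]
    congr 1; funext z; congr 1; ring_nf
  · have hpt : ∀ z : ℝ, z ≠ 0 →
        Real.exp (-(a^2/(2*z^2)) - z^2/2) = Real.exp (-a) * Real.exp (-(z - a/z)^2/2) := by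
      intro z hz
      rw [← Real.exp_add]
      congr 1
      field_simp
      ring
    have hfm : Measurable (fun z : ℝ => Real.exp (-(a^2/(2*z^2)) - z^2/2)) := by
      apply Measurable.exp
      exact ((measurable_const.div ((measurable_id.pow measurable_const).const_mul 2)).neg).sub
        ((measurable_id.pow measurable_const).div measurable_const)
    have hfint : Integrable (fun z : ℝ => Real.exp (-(a^2/(2*z^2)) - z^2/2)) := by
      apply Integrable.mono' (integrable_exp_neg_mul_sq (by norm_num : (0:ℝ) < 1/2))
        hfm.aestronglyMeasurable
      refine ae_of_all _ (fun z => ?_)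
      rw [Real.norm_eq_abs, abs_of_pos (Real.exp_pos _), Real.exp_le_exp]
      have : 0 ≤ a^2/(2*z^2) := by positivity
      nlinarith
    have hsplit : ∫ z : ℝ, Real.exp (-(a^2/(2*z^2)) - z^2/2)
        = (∫ z in Iic (0:ℝ), Real.exp (-(a^2/(2*z^2)) - z^2/2))
          + ∫ z in Ioi (0:ℝ), Real.exp (-(a^2/(2*z^2)) - z^2/2) := by
      rw [← integral_add_compl measurableSet_Iic hfint, compl_Iic]
    have hneg : ∫ z in Iic (0:ℝ), Real.exp (-(a^2/(2*z^2)) - z^2/2)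
        = ∫ z in Ioi (0:ℝ), Real.exp (-(a^2/(2*z^2)) - z^2/2) := by
      have h2 := integral_comp_neg_Ioi (0:ℝ) (fun z => Real.exp (-(a^2/(2*z^2)) - z^2/2))
      simp only [neg_zero, neg_sq] at h2
      exact h2.symm
    have hpos : ∫ z in Ioi (0:ℝ), Real.exp (-(a^2/(2*z^2)) - z^2/2)
        = Real.exp (-a) * (Real.sqrt (2*π) / 2) := by
      have h1 : ∫ z in Ioi (0:ℝ), Real.exp (-(a^2/(2*z^2)) - z^2/2)
          = ∫ z in Ioi (0:ℝ), Real.exp (-a) * Real.exp (-(z - a/z)^2/2) :=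
        setIntegral_congr_fun measurableSet_Ioi
          (fun z hz => hpt z (ne_of_gt (mem_Ioi.mp hz)))
      rw [h1, integral_const_mul, half_line ha]
    rw [hsplit, hneg, hpos]
    ring

open ProbabilityTheory Complex in
lemma gauss_density {E : Type*} [NormedAddCommGroup E] [NormedSpace ℝ E] (g : ℝ → E) :
    ∫ x, g x ∂(gaussianReal 0 1) = ∫ x, gaussianPDFReal 0 1 x • g x := by
  rw [gaussianReal_of_var_ne_zero 0 one_ne_zero]
  have h : (fun x => gaussianPDF 0 1 x)
      = fun x => (((gaussianPDFReal 0 1 x).toNNReal : NNReal) : ENNReal) := rfl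
  rw [show gaussianPDF 0 1
      = fun x => (((gaussianPDFReal 0 1 x).toNNReal : NNReal) : ENNReal) from rfl,
    integral_withDensity_eq_integral_smul ((measurable_gaussianPDFReal 0 1).real_toNNReal) g]
  congr 1
  funext x
  rw [NNReal.smul_def, Real.coe_toNNReal _ (gaussianPDFReal_nonneg 0 1 x)]

open ProbabilityTheory Complex in
lemma gauss_cf (u : ℝ) :
    ∫ x, Complex.exp (Complex.I * u * x) ∂(gaussianReal 0 1)
      = Complex.exp ((-(u^2/2) : ℝ) : ℂ) := by
  rw [gauss_density]
  have hpdf : ∀ x : ℝ, gaussianPDFReal 0 1 x = (Real.sqrt (2*π))⁻¹ * Real.exp (-x^2/2) := by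
    intro x
    rw [gaussianPDFReal]
    norm_num
  have h1 : ∀ x : ℝ, gaussianPDFReal 0 1 x • Complex.exp (Complex.I * u * x)
      = ((Real.sqrt (2*π))⁻¹ : ℂ) * (Complex.exp (Complex.I * u * x)
          * Complex.exp (-(1/2 : ℂ) * (x:ℂ)^2)) := by
    intro x
    rw [hpdf x, real_smul]
    push_cast
    rw [show -(1/2 : ℂ) * (x:ℂ)^2 = -(x:ℂ)^2/2 by ring]
    ring
  simp_rw [h1]
  rw [integral_const_mul]
  have hfou := fourierIntegral_gaussian (b := (1/2 : ℂ)) (by norm_num) (u : ℂ)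
  rw [show ((π:ℂ)/(1/2)) = ((2*π:ℝ):ℂ) by push_cast; ring] at hfou
  rw [hfou]
  have hsq : (((2*π : ℝ) : ℂ))^((1/2 : ℂ)) = ((Real.sqrt (2*π) : ℝ) : ℂ) := by
    have h2π : (0:ℝ) ≤ 2*π := by positivity
    rw [show ((1/2 : ℂ)) = (((1/2 : ℝ)) : ℂ) by norm_num, ← Complex.ofReal_cpow h2π,
      Real.sqrt_eq_rpow]
  rw [hsq]
  have hne : ((Real.sqrt (2*π) : ℝ) : ℂ) ≠ 0 := by
    simp only [ne_eq, Complex.ofReal_eq_zero]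
    positivity
  rw [← mul_assoc, inv_mul_cancel₀ hne, one_mul]
  congr 1
  push_cast
  ring

open ProbabilityTheory in
lemma pdf01 (x : ℝ) : gaussianPDFReal 0 1 x = (Real.sqrt (2*π))⁻¹ * Real.exp (-x^2/2) := by
  rw [gaussianPDFReal]
  norm_num

open ProbabilityTheory Complex in
lemma cauchy_cf (s : ℝ) :
    ∫ p : ℝ × ℝ, Complex.exp (Complex.I * s * ((p.1 / p.2 : ℝ) : ℂ))
      ∂((gaussianReal 0 1).prod (gaussianReal 0 1))
      = ((Real.exp (-|s|) : ℝ) : ℂ) := by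
  have hmeas : Measurable (fun p : ℝ×ℝ => Complex.exp (Complex.I * s * ((p.1/p.2 : ℝ):ℂ))) := by
    apply Complex.measurable_exp.comp
    exact (Complex.measurable_ofReal.comp (measurable_fst.div measurable_snd)).const_mul
      (Complex.I * s)
  have hint : Integrable (fun p : ℝ×ℝ => Complex.exp (Complex.I * s * ((p.1/p.2 : ℝ):ℂ)))
      ((gaussianReal 0 1).prod (gaussianReal 0 1)) := by
    apply Integrable.mono' (integrable_const (1:ℝ)) hmeas.aestronglyMeasurable
    refine ae_of_all _ (fun p => ?_)
    have hre : (Complex.I * s * ((p.1/p.2 : ℝ):ℂ)).re = 0 := by simp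
    rw [Complex.norm_exp, hre, Real.exp_zero]
  rw [integral_prod_symm _ hint]
  have hin : ∀ y : ℝ, ∫ x, Complex.exp (Complex.I * s * ((x/y : ℝ):ℂ)) ∂(gaussianReal 0 1)
      = ((Real.exp (-((s/y)^2/2)) : ℝ) : ℂ) := by
    intro y
    have h : ∀ x : ℝ, (Complex.I * s * ((x/y : ℝ):ℂ)) = Complex.I * ((s/y : ℝ):ℂ) * (x:ℂ) := by
      intro x; push_cast; ring
    simp_rw [h]
    rw [gauss_cf (s/y), ← Complex.ofReal_exp]
  simp_rw [hin]
  rw [show ∫ (y : ℝ), ((rexp (-((s / y) ^ 2 / 2)) : ℝ) : ℂ) ∂gaussianReal 0 1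
      = ((∫ (y : ℝ), rexp (-((s / y) ^ 2 / 2)) ∂gaussianReal 0 1 : ℝ) : ℂ) from
    integral_ofReal]
  congr 1
  rw [gauss_density]
  have h2 : ∀ y : ℝ, gaussianPDFReal 0 1 y • Real.exp (-((s/y)^2/2))
      = (Real.sqrt (2*π))⁻¹ * Real.exp (-(|s|^2/(2*y^2)) - y^2/2) := by
    intro y
    rw [pdf01, smul_eq_mul, mul_assoc, ← Real.exp_add]
    congr 2
    rw [_root_.sq_abs]
    ring
  simp_rw [h2]
  rw [integral_const_mul, glasser (abs_nonneg s), ← mul_assoc,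
    inv_mul_cancel₀ (ne_of_gt (Real.sqrt_pos.mpr (by positivity))), one_mul]

open ProbabilityTheory in
lemma indep_integral_mul {Ω : Type*} [MeasurableSpace Ω] {P : Measure Ω} [IsProbabilityMeasure P]
    {C D : Ω → ℝ} (hC : Measurable C) (hD : Measurable D) (h : IndepFun C D P)
    (g k : ℝ → ℂ) (hg : Measurable g) (hk : Measurable k) :
    ∫ ω, g (C ω) * k (D ω) ∂P = (∫ ω, g (C ω) ∂P) * ∫ ω, k (D ω) ∂P := by
  have hmap := (ProbabilityTheory.indepFun_iff_map_prod_eq_prod_map_map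
    hC.aemeasurable hD.aemeasurable).mp h
  have hpair : Measurable (fun ω => (C ω, D ω)) := hC.prodMk hD
  have hgk : AEStronglyMeasurable (fun p : ℝ × ℝ => g p.1 * k p.2)
      (Measure.map (fun ω => (C ω, D ω)) P) :=
    ((hg.comp measurable_fst).mul (hk.comp measurable_snd)).aestronglyMeasurable
  calc ∫ ω, g (C ω) * k (D ω) ∂P
      = ∫ p : ℝ×ℝ, g p.1 * k p.2 ∂(Measure.map (fun ω => (C ω, D ω)) P) :=
        (integral_map hpair.aemeasurable hgk).symm
    _ = ∫ p : ℝ×ℝ, g p.1 * k p.2 ∂((Measure.map C P).prod (Measure.map D P)) := by rw [hmap]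
    _ = (∫ x, g x ∂(Measure.map C P)) * ∫ x, k x ∂(Measure.map D P) := integral_prod_mul g k
    _ = (∫ ω, g (C ω) ∂P) * ∫ ω, k (D ω) ∂P := by
        rw [integral_map hC.aemeasurable hg.aestronglyMeasurable,
          integral_map hD.aemeasurable hk.aestronglyMeasurable]

open ProbabilityTheory in
lemma cauchy_marg {Ω : Type*} [MeasurableSpace Ω] {P : Measure Ω} [IsProbabilityMeasure P]
    {N Z : Ω → ℝ} (hN : Measurable N) (hZ : Measurable Z) (hind : IndepFun N Z P)
    (hNlaw : Measure.map N P = gaussianReal 0 1) (hZlaw : Measure.map Z P = gaussianReal 0 1)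
    (s : ℝ) :
    ∫ ω, Complex.exp (Complex.I * s * ((N ω / Z ω : ℝ) : ℂ)) ∂P
      = ((Real.exp (-|s|) : ℝ) : ℂ) := by
  have hmap := (ProbabilityTheory.indepFun_iff_map_prod_eq_prod_map_map
    hN.aemeasurable hZ.aemeasurable).mp hind
  rw [hNlaw, hZlaw] at hmap
  have hpair : Measurable (fun ω => (N ω, Z ω)) := hN.prodMk hZ
  have hfm : AEStronglyMeasurable (fun p : ℝ×ℝ => Complex.exp (Complex.I * s * ((p.1/p.2 : ℝ):ℂ)))
      (Measure.map (fun ω => (N ω, Z ω)) P) := by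
    apply Measurable.aestronglyMeasurable
    apply Complex.measurable_exp.comp
    exact (Complex.measurable_ofReal.comp (measurable_fst.div measurable_snd)).const_mul
      (Complex.I * s)
  calc ∫ ω, Complex.exp (Complex.I * s * ((N ω / Z ω : ℝ) : ℂ)) ∂P
      = ∫ p : ℝ×ℝ, Complex.exp (Complex.I * s * ((p.1/p.2 : ℝ):ℂ))
          ∂(Measure.map (fun ω => (N ω, Z ω)) P) := (integral_map hpair.aemeasurable hfm).symm
    _ = ((Real.exp (-|s|) : ℝ) : ℂ) := by rw [hmap]; exact cauchy_cf s

lemma real_sign_mul_abs (r : ℝ) : Real.sign r * |r| = r := by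
  rcases lt_trichotomy r 0 with h|rfl|h
  · rw [Real.sign_of_neg h, abs_of_neg h]; ring
  · simp
  · rw [Real.sign_of_pos h, abs_of_pos h]; ring

lemma hK_real {t β σ : ℝ} (hσ : 0 < σ) :
    |t*(σ*β)| * Real.sign (t*(σ*β)) * Real.log |t*(σ*β)|
      = |σ*t| * β * Real.sign t * Real.log |t*σ| + t*(σ*β*Real.log |β|) := by
  rcases eq_or_ne t 0 with rfl|ht
  · simp
  rcases eq_or_ne β 0 with rfl|hb
  · simp
  have h1 : |t*(σ*β)| * Real.sign (t*(σ*β)) = t*(σ*β) := by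
    rw [mul_comm]; exact real_sign_mul_abs _
  have h2 : |σ*t| * Real.sign t = σ * t := by
    rw [abs_mul, abs_of_pos hσ, mul_assoc, mul_comm (|t|) _, real_sign_mul_abs]
  have hts : t*σ ≠ 0 := mul_ne_zero ht (ne_of_gt hσ)
  have hlog : Real.log |t*(σ*β)| = Real.log |t*σ| + Real.log |β| := by
    rw [show t*(σ*β) = (t*σ)*β by ring, abs_mul,
      Real.log_mul (by simpa using hts) (by simpa using hb)]
  calc |t*(σ*β)| * Real.sign (t*(σ*β)) * Real.log |t*(σ*β)|
      = (|t*(σ*β)| * Real.sign (t*(σ*β))) * (Real.log |t*σ| + Real.log |β|) := by rw [hlog]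
    _ = (t*(σ*β)) * (Real.log |t*σ| + Real.log |β|) := by rw [h1]
    _ = (|σ*t| * Real.sign t) * β * Real.log |t*σ| + t*(σ*β*Real.log |β|) := by rw [h2]; ring
    _ = |σ*t| * β * Real.sign t * Real.log |t*σ| + t*(σ*β*Real.log |β|) := by ring

lemma exponent_eq {t β σ μl : ℝ} (hβ : |β| ≤ 1) (hσ : 0 < σ) :
    Complex.I * (t:ℂ) * (μl:ℂ) + (((-|t*(σ*(1-|β|))| : ℝ):ℂ)
      + (-((|t*(σ*β)| : ℝ):ℂ) * (1 + Complex.I * ((Real.sign (t*(σ*β)) : ℝ) : ℂ)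
          * (((2/Real.pi) * Real.log |t*(σ*β)| : ℝ) : ℂ))))
    = -((|σ*t| : ℝ):ℂ) * (1 + Complex.I * (β:ℂ) * ((Real.sign t : ℝ):ℂ)
        * (((2/Real.pi) * Real.log |t*σ| : ℝ):ℂ))
      + Complex.I * (t:ℂ) * ((μl - σ*β*((2/Real.pi)*Real.log |β|) : ℝ):ℂ) := by
  have hRe : |t*(σ*(1-|β|))| + |t*(σ*β)| = |σ*t| := by
    have h1 : (0:ℝ) ≤ 1 - |β| := by linarith
    have h2 : |t*(σ*(1-|β|))| = |t| * (σ*(1-|β|)) := by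
      rw [abs_mul, abs_of_nonneg (mul_nonneg hσ.le h1)]
    have h3 : |t*(σ*β)| = |t| * (σ*|β|) := by rw [abs_mul, abs_mul, abs_of_pos hσ]
    have h4 : |σ*t| = σ * |t| := by rw [abs_mul, abs_of_pos hσ]
    rw [h2, h3, h4]
    ring
  have hIm : t*μl - (2/Real.pi) * (|t*(σ*β)| * Real.sign (t*(σ*β)) * Real.log |t*(σ*β)|)
      = t*(μl - σ*β*((2/Real.pi)*Real.log |β|))
        - (2/Real.pi) * (|σ*t| * β * Real.sign t * Real.log |t*σ|) := by
    have := hK_real (t := t) (β := β) (σ := σ) hσ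
    linear_combination (-(2/Real.pi)) * this
  have e1 : Complex.I * (t:ℂ) * (μl:ℂ) + (((-|t*(σ*(1-|β|))| : ℝ):ℂ)
      + (-((|t*(σ*β)| : ℝ):ℂ) * (1 + Complex.I * ((Real.sign (t*(σ*β)) : ℝ) : ℂ)
          * (((2/Real.pi) * Real.log |t*(σ*β)| : ℝ) : ℂ))))
      = ((-(|t*(σ*(1-|β|))| + |t*(σ*β)|) : ℝ) : ℂ)
        + Complex.I * ((t*μl - (2/Real.pi) * (|t*(σ*β)| * Real.sign (t*(σ*β))
            * Real.log |t*(σ*β)|) : ℝ) : ℂ) := by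
    push_cast
    ring
  have e2 : -((|σ*t| : ℝ):ℂ) * (1 + Complex.I * (β:ℂ) * ((Real.sign t : ℝ):ℂ)
        * (((2/Real.pi) * Real.log |t*σ| : ℝ):ℂ))
      + Complex.I * (t:ℂ) * ((μl - σ*β*((2/Real.pi)*Real.log |β|) : ℝ):ℂ)
      = ((-(|σ*t|) : ℝ) : ℂ)
        + Complex.I * ((t*(μl - σ*β*((2/Real.pi)*Real.log |β|))
            - (2/Real.pi) * (|σ*t| * β * Real.sign t * Real.log |t*σ|) : ℝ) : ℂ) := by
    push_cast
    ring
  rw [e1, e2, hRe, hIm]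

/-- Proposition 1 of the paper: with N, Z independent standard normals and T a
totally skewed Cauchy S₁(1,1,1,0), all mutually independent, the variable
Y = σ(1-|β|)(N/Z) + σβT + μ has the S₀(1,β,σ,μ) Cauchy characteristic function
for a suitable location μ₀ determined by μ, β, σ. -/
theorem cauchy_stochastic_representation
    {Ω : Type*} [MeasurableSpace Ω] (P : Measure Ω) [IsProbabilityMeasure P]
    (N Z T : Ω → ℝ) (hN : Measurable N) (hZ : Measurable Z) (hT : Measurable T)
    (hIndep : iIndepFun ![N, Z, T] P)
    (hNlaw : Measure.map N P = gaussianReal 0 1)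
    (hZlaw : Measure.map Z P = gaussianReal 0 1)
    (hTchf : ∀ t : ℝ, ∫ ω, Complex.exp (Complex.I * (t : ℂ) * (T ω : ℂ)) ∂P =
      Complex.exp (-((|t| : ℝ) : ℂ) *
        (1 + Complex.I * ((Real.sign t : ℝ) : ℂ) *
          (((2 / Real.pi) * Real.log |t| : ℝ) : ℂ))))
    (β σ μl : ℝ) (hβ : |β| ≤ 1) (hσ : 0 < σ) :
    ∃ μ₀ : ℝ,
      ∀ t : ℝ,
        ∫ ω, Complex.exp (Complex.I * (t : ℂ) *
            ((σ * (1 - |β|) * (N ω / Z ω) + σ * β * T ω + μl : ℝ) : ℂ)) ∂P =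
          Complex.exp (-((|σ * t| : ℝ) : ℂ) *
            (1 + Complex.I * (β : ℂ) * ((Real.sign t : ℝ) : ℂ) *
              (((2 / Real.pi) * Real.log |t * σ| : ℝ) : ℂ)) +
            Complex.I * (t : ℂ) * (μ₀ : ℂ)) := by
  refine ⟨μl - σ*β*((2/Real.pi)*Real.log |β|), fun t => ?_⟩
  have hm : ∀ i, Measurable (![N,Z,T] i) := by
    intro i
    fin_cases i
    · exact hN
    · exact hZ
    · exact hT
  have hNZ : IndepFun N Z P := by
    have := hIndep.indepFun (show (0:Fin 3) ≠ 1 by decide)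
    simpa using this
  have hNZT : IndepFun (fun ω => (N ω, Z ω)) T P := by
    have := hIndep.indepFun_prodMk hm 0 1 2 (by decide) (by decide)
    simpa using this
  have hCT : IndepFun (fun ω => N ω / Z ω) T P := by
    have h := hNZT.comp (measurable_fst.div measurable_snd) measurable_id
    exact h
  have hg : Measurable (fun x : ℝ => Complex.exp (Complex.I * ((t*(σ*(1-|β|)) : ℝ):ℂ) * (x:ℂ))) := by
    apply Complex.measurable_exp.comp
    exact Complex.measurable_ofReal.const_mul _
  have hk : Measurable (fun x : ℝ => Complex.exp (Complex.I * ((t*(σ*β) : ℝ):ℂ) * (x:ℂ))) := by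
    apply Complex.measurable_exp.comp
    exact Complex.measurable_ofReal.const_mul _
  have key : ∀ ω, Complex.exp (Complex.I * (t:ℂ)
      * ((σ * (1 - |β|) * (N ω / Z ω) + σ * β * T ω + μl : ℝ) : ℂ))
      = Complex.exp (Complex.I * (t:ℂ) * (μl:ℂ))
        * (Complex.exp (Complex.I * ((t*(σ*(1-|β|)) : ℝ):ℂ) * ((N ω / Z ω : ℝ):ℂ))
          * Complex.exp (Complex.I * ((t*(σ*β) : ℝ):ℂ) * ((T ω : ℝ):ℂ))) := by
    intro ω
    rw [← Complex.exp_add, ← Complex.exp_add]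
    congr 1
    push_cast
    ring
  simp_rw [key]
  rw [integral_const_mul]
  have hprod : ∫ ω, Complex.exp (Complex.I * ((t*(σ*(1-|β|)) : ℝ):ℂ) * ((N ω / Z ω : ℝ):ℂ))
        * Complex.exp (Complex.I * ((t*(σ*β) : ℝ):ℂ) * ((T ω : ℝ):ℂ)) ∂P
      = (∫ ω, Complex.exp (Complex.I * ((t*(σ*(1-|β|)) : ℝ):ℂ) * ((N ω / Z ω : ℝ):ℂ)) ∂P)
        * ∫ ω, Complex.exp (Complex.I * ((t*(σ*β) : ℝ):ℂ) * ((T ω : ℝ):ℂ)) ∂P :=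
    indep_integral_mul (hN.div hZ) hT hCT _ _ hg hk
  rw [hprod, cauchy_marg hN hZ hNZ hNlaw hZlaw (t*(σ*(1-|β|))), hTchf (t*(σ*β))]
  rw [Complex.ofReal_exp, ← Complex.exp_add, ← Complex.exp_add]
  exact congrArg Complex.exp (exponent_eq hβ hσ)
end

section
/- For any admissible stable parameters with α ∈ (0,2), α ≠ 1, the tail series approximation term-by-term bound holds: for |x| ≥ (α Γ(kα+α)/Γ(kα+1))^{1/α} + α with x = (y-μ-ξ)/(σλ) and k ≥ 1, the terms a_i = (Γ(iα+1)/Γ(i+1))|x|^{-iα} of the asymptotic pdf series are decreasing in i for 1 ≤ i ≤ k, i.e., a_{i+1} ≤ a_i for all 1 ≤ i ≤ k-1. -/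
open Real

/-- Log-convexity consequence: the ratio `Γ(t+δ)/Γ(t)` is monotone in `t`. -/
lemma gamma_ratio_mono {a b δ : ℝ} (ha : 0 < a) (hab : a ≤ b) (hδ : 0 ≤ δ) :
    Real.Gamma (a + δ) * Real.Gamma b ≤ Real.Gamma a * Real.Gamma (b + δ) := by
  rcases eq_or_lt_of_le hδ with rfl | hδ
  · simp [mul_comm]
  rcases eq_or_lt_of_le hab with rfl | hab
  · nlinarith [Real.Gamma_pos_of_pos ha, Real.Gamma_pos_of_pos (by linarith : (0:ℝ) < a + δ)]
  have hb : (0:ℝ) < b := lt_trans ha hab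
  have hbδ : (0:ℝ) < b + δ := by linarith
  have haδ : (0:ℝ) < a + δ := by linarith
  set D : ℝ := b - a + δ with hD
  have hD0 : 0 < D := by simp [hD]; linarith
  set t : ℝ := δ / D with ht
  set s : ℝ := (b - a) / D with hs
  have hts : t + s = 1 := by
    rw [ht, hs, ← add_div, div_eq_one_iff_eq hD0.ne', hD]; ring
  have ht0 : 0 ≤ t := by positivity
  have hs0 : 0 ≤ s := div_nonneg (by linarith) hD0.le
  have hmemA : a ∈ Set.Ioi (0:ℝ) := ha
  have hmemB : b + δ ∈ Set.Ioi (0:ℝ) := hbδ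
  have hconv := Real.convexOn_log_Gamma
  -- a + δ = (1-t) • a + t • (b+δ)
  have h1 : (Real.log ∘ Real.Gamma) (s • a + t • (b + δ)) ≤
      s • (Real.log ∘ Real.Gamma) a + t • (Real.log ∘ Real.Gamma) (b + δ) :=
    hconv.2 hmemA hmemB hs0 ht0 (by linarith)
  have h2 : (Real.log ∘ Real.Gamma) (t • a + s • (b + δ)) ≤
      t • (Real.log ∘ Real.Gamma) a + s • (Real.log ∘ Real.Gamma) (b + δ) :=
    hconv.2 hmemA hmemB ht0 hs0 hts
  have he1 : s • a + t • (b + δ) = a + δ := by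
    rw [ht, hs, smul_eq_mul, smul_eq_mul, div_mul_eq_mul_div, div_mul_eq_mul_div,
      ← add_div, div_eq_iff hD0.ne', hD]; ring
  have he2 : t • a + s • (b + δ) = b := by
    rw [ht, hs, smul_eq_mul, smul_eq_mul, div_mul_eq_mul_div, div_mul_eq_mul_div,
      ← add_div, div_eq_iff hD0.ne', hD]; ring
  rw [he1] at h1
  rw [he2] at h2
  simp only [Function.comp_apply, smul_eq_mul] at h1 h2
  have hsum : Real.log (Real.Gamma (a + δ)) + Real.log (Real.Gamma b) ≤
      Real.log (Real.Gamma a) + Real.log (Real.Gamma (b + δ)) := by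
    calc Real.log (Real.Gamma (a + δ)) + Real.log (Real.Gamma b)
        ≤ s * Real.log (Real.Gamma a) + t * Real.log (Real.Gamma (b + δ)) +
          (t * Real.log (Real.Gamma a) + s * Real.log (Real.Gamma (b + δ))) := add_le_add h1 h2
      _ = (t + s) * (Real.log (Real.Gamma a) + Real.log (Real.Gamma (b + δ))) := by ring
      _ = Real.log (Real.Gamma a) + Real.log (Real.Gamma (b + δ)) := by rw [hts, one_mul]
  have gA := Real.Gamma_pos_of_pos ha
  have gB := Real.Gamma_pos_of_pos hb
  have gAδ := Real.Gamma_pos_of_pos haδ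
  have gBδ := Real.Gamma_pos_of_pos hbδ
  have := Real.exp_le_exp.mpr hsum
  rwa [Real.exp_add, Real.exp_add, Real.exp_log gAδ, Real.exp_log gB,
    Real.exp_log gA, Real.exp_log gBδ] at this

/-- Wendel-type inequality: `Γ(x+s) ≤ x^(s-1) Γ(x+1)` for `x > 0`, `0 ≤ s ≤ 1`. -/
lemma gamma_wendel {x s : ℝ} (hx : 0 < x) (hs0 : 0 ≤ s) (hs1 : s ≤ 1) :
    Real.Gamma (x + s) ≤ x ^ (s - 1) * Real.Gamma (x + 1) := by
  have hx1 : (0:ℝ) < x + 1 := by linarith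
  have hxs : (0:ℝ) < x + s := by linarith
  have gx := Real.Gamma_pos_of_pos hx
  have gx1 := Real.Gamma_pos_of_pos hx1
  have hconv := Real.convexOn_log_Gamma
  have h1 : (Real.log ∘ Real.Gamma) ((1 - s) • x + s • (x + 1)) ≤
      (1 - s) • (Real.log ∘ Real.Gamma) x + s • (Real.log ∘ Real.Gamma) (x + 1) :=
    hconv.2 (Set.mem_Ioi.mpr hx) (Set.mem_Ioi.mpr hx1) (by linarith) hs0 (by ring)
  have he : (1 - s) • x + s • (x + 1) = x + s := by simp [smul_eq_mul]; ring
  rw [he] at h1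
  simp only [Function.comp_apply, smul_eq_mul] at h1
  have key : Real.Gamma (x + s) ≤ Real.Gamma x ^ (1 - s) * Real.Gamma (x + 1) ^ s := by
    have := Real.exp_le_exp.mpr h1
    rwa [Real.exp_log (Real.Gamma_pos_of_pos hxs), Real.exp_add,
      mul_comm (1 - s) (Real.log (Real.Gamma x)), mul_comm s (Real.log (Real.Gamma (x + 1))),
      ← Real.rpow_def_of_pos gx, ← Real.rpow_def_of_pos gx1] at this
  have hG : Real.Gamma x = Real.Gamma (x + 1) / x := by
    rw [Real.Gamma_add_one hx.ne']; field_simp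
  calc Real.Gamma (x + s) ≤ Real.Gamma x ^ (1 - s) * Real.Gamma (x + 1) ^ s := key
    _ = x ^ (s - 1) * Real.Gamma (x + 1) := by
        rw [hG, Real.div_rpow gx1.le hx.le]
        have e1 : Real.Gamma (x + 1) ^ (1 - s) * Real.Gamma (x + 1) ^ s = Real.Gamma (x + 1) := by
          rw [← Real.rpow_add gx1]; norm_num
        have e2 : x ^ (s - 1) = (x ^ (1 - s))⁻¹ := by
          rw [← Real.rpow_neg hx.le, neg_sub]
        rw [e2, div_mul_eq_mul_div, e1]
        rw [div_eq_mul_inv, mul_comm]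

/-- Key bound: `α Γ(iα+α) ≤ Γ(iα+1) y^α` in the convergence region. -/
lemma stable_key (α y : ℝ) (hα : 0 < α) (i k : ℕ) (hi : 1 ≤ i) (hik : i ≤ k)
    (hy : (α * Real.Gamma ((k : ℝ) * α + α) / Real.Gamma ((k : ℝ) * α + 1)) ^ (1 / α)
        + α ≤ y) :
    α * Real.Gamma ((i : ℝ) * α + α) ≤ Real.Gamma ((i : ℝ) * α + 1) * y ^ α := by
  have hi1 : (1 : ℝ) ≤ (i : ℝ) := by exact_mod_cast hi
  have hik' : (i : ℝ) ≤ (k : ℝ) := by exact_mod_cast hik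
  have hiα : 0 < (i : ℝ) * α := by nlinarith
  have hkα : 0 < (k : ℝ) * α := by nlinarith
  have hkα1 : 0 < (k : ℝ) * α + 1 := by linarith
  have hkαα : 0 < (k : ℝ) * α + α := by linarith
  have gk1 := Real.Gamma_pos_of_pos hkα1
  have gkα := Real.Gamma_pos_of_pos hkαα
  have giα1 := Real.Gamma_pos_of_pos (show (0:ℝ) < (i : ℝ) * α + 1 by linarith)
  have ha0 : 0 ≤ α * Real.Gamma ((k : ℝ) * α + α) / Real.Gamma ((k : ℝ) * α + 1) := by
    positivity
  have hroot : (0:ℝ) ≤ (α * Real.Gamma ((k : ℝ) * α + α) / Real.Gamma ((k : ℝ) * α + 1)) ^ (1 / α) :=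
    Real.rpow_nonneg ha0 _
  have hyα : α ≤ y := by linarith
  have hy0 : 0 < y := lt_of_lt_of_le hα hyα
  rcases le_or_gt α 1 with hle | hgt
  · -- Wendel route: Γ(iα+α) ≤ (iα)^(α-1) Γ(iα+1) and α·(iα)^(α-1) ≤ α^α ≤ y^α
    have hw := gamma_wendel hiα hα.le hle
    have h1 : ((i : ℝ) * α) ^ (α - 1) ≤ α ^ (α - 1) :=
      Real.rpow_le_rpow_of_nonpos hα (by nlinarith) (by linarith)
    have h2 : α * α ^ (α - 1) = α ^ α := by
      nth_rewrite 1 [← Real.rpow_one α]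
      rw [← Real.rpow_add hα]; norm_num
    have h3 : α ^ α ≤ y ^ α := Real.rpow_le_rpow hα.le hyα hα.le
    calc α * Real.Gamma ((i : ℝ) * α + α)
        ≤ α * (((i : ℝ) * α) ^ (α - 1) * Real.Gamma ((i : ℝ) * α + 1)) := by
          exact mul_le_mul_of_nonneg_left hw hα.le
      _ ≤ α * (α ^ (α - 1) * Real.Gamma ((i : ℝ) * α + 1)) := by
          have := mul_le_mul_of_nonneg_right h1 giα1.le
          nlinarith
      _ = (α * α ^ (α - 1)) * Real.Gamma ((i : ℝ) * α + 1) := by ring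
      _ = α ^ α * Real.Gamma ((i : ℝ) * α + 1) := by rw [h2]
      _ ≤ y ^ α * Real.Gamma ((i : ℝ) * α + 1) := mul_le_mul_of_nonneg_right h3 giα1.le
      _ = Real.Gamma ((i : ℝ) * α + 1) * y ^ α := by ring
  · -- ratio monotonicity route
    have hmono := gamma_ratio_mono (a := (i : ℝ) * α + 1) (b := (k : ℝ) * α + 1) (δ := α - 1)
      (by linarith) (by nlinarith) (by linarith)
    have hre : (i : ℝ) * α + 1 + (α - 1) = (i : ℝ) * α + α := by ring
    have hre2 : (k : ℝ) * α + 1 + (α - 1) = (k : ℝ) * α + α := by ring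
    rw [hre, hre2] at hmono
    -- y^α ≥ α Γ(kα+α)/Γ(kα+1)
    have hxa : α * Real.Gamma ((k : ℝ) * α + α) / Real.Gamma ((k : ℝ) * α + 1) ≤ y ^ α := by
      have h1 : ((α * Real.Gamma ((k : ℝ) * α + α) / Real.Gamma ((k : ℝ) * α + 1)) ^ (1 / α)) ^ α
          ≤ y ^ α := Real.rpow_le_rpow hroot (by linarith) hα.le
      rwa [← Real.rpow_mul ha0, one_div, inv_mul_cancel₀ hα.ne', Real.rpow_one] at h1
    -- combine
    have h2 : α * Real.Gamma ((i : ℝ) * α + α) ≤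
        Real.Gamma ((i : ℝ) * α + 1) * (α * Real.Gamma ((k : ℝ) * α + α) / Real.Gamma ((k : ℝ) * α + 1)) := by
      rw [mul_div_assoc', le_div_iff₀ gk1]
      nlinarith [mul_le_mul_of_nonneg_left hmono hα.le]
    calc α * Real.Gamma ((i : ℝ) * α + α) ≤ _ := h2
      _ ≤ Real.Gamma ((i : ℝ) * α + 1) * y ^ α :=
        mul_le_mul_of_nonneg_left hxa giα1.le

/-- Monotonicity of the terms of the asymptotic tail series of the stable pdf:
in the convergence region |x| ≥ (αΓ(kα+α)/Γ(kα+1))^{1/α} + α, the terms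
aᵢ = (Γ(iα+1)/Γ(i+1))|x|^{-iα} are decreasing for 1 ≤ i ≤ k. -/
theorem stable_tail_series_terms_decreasing
    (α : ℝ) (hα : 0 < α) (hα2 : α < 2) (hα1 : α ≠ 1)
    (k : ℕ) (hk : 1 ≤ k) (x : ℝ)
    (hx : (α * Real.Gamma ((k : ℝ) * α + α) / Real.Gamma ((k : ℝ) * α + 1)) ^ (1 / α)
        + α ≤ |x|) :
    ∀ i : ℕ, 1 ≤ i → i ≤ k - 1 →
      Real.Gamma (((i : ℝ) + 1) * α + 1) / Real.Gamma (((i : ℝ) + 1) + 1) *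
          |x| ^ (-(((i : ℝ) + 1) * α)) ≤
        Real.Gamma ((i : ℝ) * α + 1) / Real.Gamma ((i : ℝ) + 1) *
          |x| ^ (-((i : ℝ) * α)) := by
  intro i hi1 hik
  have hik' : i ≤ k := le_trans hik (Nat.sub_le k 1)
  have hi1' : (1 : ℝ) ≤ (i : ℝ) := by exact_mod_cast hi1
  have ha0 : 0 ≤ α * Real.Gamma ((k : ℝ) * α + α) / Real.Gamma ((k : ℝ) * α + 1) := by
    have hkα : 0 < (k : ℝ) * α := by
      have : (1:ℝ) ≤ (k:ℝ) := by exact_mod_cast hk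
      nlinarith
    have := Real.Gamma_pos_of_pos (show (0:ℝ) < (k : ℝ) * α + α by linarith)
    have := Real.Gamma_pos_of_pos (show (0:ℝ) < (k : ℝ) * α + 1 by linarith)
    positivity
  have hroot := Real.rpow_nonneg ha0 (1 / α)
  have hy0 : 0 < |x| := by linarith
  have key := stable_key α |x| hα i k hi1 hik' hx
  have giα1 := Real.Gamma_pos_of_pos (show (0:ℝ) < (i : ℝ) * α + 1 by nlinarith)
  have gi1 := Real.Gamma_pos_of_pos (show (0:ℝ) < (i : ℝ) + 1 by linarith)
  have giαα := Real.Gamma_pos_of_pos (show (0:ℝ) < (i : ℝ) * α + α by nlinarith)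
  have hyiα : 0 < |x| ^ (-((i : ℝ) * α)) := Real.rpow_pos_of_pos hy0 _
  have hyα : 0 < |x| ^ α := Real.rpow_pos_of_pos hy0 _
  -- expand Gammas
  have e1 : Real.Gamma (((i : ℝ) + 1) * α + 1) = ((i : ℝ) * α + α) * Real.Gamma ((i : ℝ) * α + α) := by
    rw [show ((i : ℝ) + 1) * α + 1 = ((i : ℝ) * α + α) + 1 by ring,
      Real.Gamma_add_one (show (i : ℝ) * α + α ≠ 0 by nlinarith)]
  have e2 : Real.Gamma (((i : ℝ) + 1) + 1) = ((i : ℝ) + 1) * Real.Gamma ((i : ℝ) + 1) := by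
    rw [Real.Gamma_add_one (show ((i : ℝ) + 1) ≠ 0 by positivity)]
  have e3 : |x| ^ (-(((i : ℝ) + 1) * α)) = |x| ^ (-((i : ℝ) * α)) * |x| ^ (-α) := by
    rw [← Real.rpow_add hy0]; ring_nf
  rw [e1, e2, e3]
  have e4 : |x| ^ (-α) = (|x| ^ α)⁻¹ := Real.rpow_neg hy0.le α
  rw [e4]
  rw [div_mul_eq_mul_div, div_mul_eq_mul_div, div_le_div_iff₀ (by positivity) gi1]
  calc (↑i * α + α) * Real.Gamma (↑i * α + α) * (|x| ^ (-((i:ℝ) * α)) * (|x| ^ α)⁻¹) *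
        Real.Gamma ((i:ℝ) + 1)
      = ((↑i + 1) * (α * Real.Gamma (↑i * α + α))) * (|x| ^ α)⁻¹ *
          (|x| ^ (-((i:ℝ) * α)) * Real.Gamma ((i:ℝ) + 1)) := by ring
    _ ≤ ((↑i + 1) * (Real.Gamma (↑i * α + 1) * |x| ^ α)) * (|x| ^ α)⁻¹ *
          (|x| ^ (-((i:ℝ) * α)) * Real.Gamma ((i:ℝ) + 1)) := by
        apply mul_le_mul_of_nonneg_right _ (by positivity)
        apply mul_le_mul_of_nonneg_right _ (by positivity)
        exact mul_le_mul_of_nonneg_left key (by linarith)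
    _ = Real.Gamma (↑i * α + 1) * |x| ^ (-((i:ℝ) * α)) * ((↑i + 1) * Real.Gamma ((i:ℝ) + 1)) *
          (|x| ^ α * (|x| ^ α)⁻¹) := by ring
    _ = Real.Gamma (↑i * α + 1) * |x| ^ (-((i:ℝ) * α)) * ((↑i + 1) * Real.Gamma ((i:ℝ) + 1)) := by
        rw [mul_inv_cancel₀ hyα.ne', mul_one]
end
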